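/- Let chambers U and U' be separated by the wall D(M), with U on the negative side and U' on the positive side. Then: (a) for any X ∈ S(U) there is no nonzero weakly admissible morphism X → M; and (b) if X ∉ S(U) but X ∈ S(U'), then there exists a nonzero weakly admissible epimorphism X ↠ M. -/

import Mathlib

set_option autoImplicit false
set_option maxHeartbeats 1000000

open scoped BigOperators

noncomputable section

/-- The pairing `θ(M)` of a stability condition `θ ∈ ℝⁿ` with a dimension vector `d ∈ ℕⁿ`:
the dot product. -/
def pr {n : ℕ} (θ : Fin n → ℝ) (d : Fin n → ℕ) : ℝ := ∑ k, θ k * (d k : ℝ)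

/-- `M` lies in `add Bk`, the additive closure of the family of modules `Bk`, i.e. `M` is
isomorphic to a finite direct sum of members of the family. -/
def InAdd (Λ : Type) [Ring Λ] {ι : Type} (Bk : ι → Type)
    [∀ i, AddCommGroup (Bk i)] [∀ i, Module Λ (Bk i)]
    (M : Type) [AddCommGroup M] [Module Λ M] : Prop :=
  ∃ (k : ℕ) (f : Fin k → ι), Nonempty (M ≃ₗ[Λ] ((j : Fin k) → Bk (f j)))

/-- `M` is a brick: it is nonzero and every nonzero endomorphism is invertible. -/
def IsBrick (Λ : Type) [Ring Λ] (M : Type) [AddCommGroup M] [Module Λ M] : Prop :=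
  Nontrivial M ∧ ∀ f : M →ₗ[Λ] M, f ≠ 0 → Function.Bijective f

/-- `M` is rigid: every self-extension of `M` splits. -/
def Rigid (Λ : Type) [Ring Λ] (M : Type) [AddCommGroup M] [Module Λ M] : Prop :=
  ∀ (E : Type) [AddCommGroup E] [Module Λ E] (f : M →ₗ[Λ] E) (g : E →ₗ[Λ] M),
    Function.Injective f → Function.Surjective g → LinearMap.range f = LinearMap.ker g →
    ∃ h : M →ₗ[Λ] E, g.comp h = LinearMap.id

/-- `M` is an indecomposable module. -/
def Indecomp (Λ : Type) [Ring Λ] (M : Type) [AddCommGroup M] [Module Λ M] : Prop :=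
  Nontrivial M ∧ ∀ (A B : Type) [AddCommGroup A] [Module Λ A] [AddCommGroup B] [Module Λ B],
    Nontrivial A → Nontrivial B → IsEmpty (M ≃ₗ[Λ] (A × B))

/-- `M` has a finite filtration by submodules whose subquotients satisfy `P`
(e.g. `P = InAdd Λ Bk` gives membership in `Filt ℒ`). -/
def HasFiltBy (Λ : Type) [Ring Λ]
    (P : (M : Type) → [AddCommGroup M] → [Module Λ M] → Prop)
    (M : Type) [AddCommGroup M] [Module Λ M] : Prop :=
  ∃ (k : ℕ) (s : Fin (k+1) → Submodule Λ M), Monotone s ∧ s 0 = ⊥ ∧ s (Fin.last k) = ⊤ ∧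
    ∀ i : Fin k, P (↥(s i.succ) ⧸ Submodule.comap (s i.succ).subtype (s i.castSucc))

/-- `N` is a (proper, nonzero) weakly admissible quotient of `M`: there is a surjection
`M ↠ N` which is not injective, with `N ∈ ℒ = add Bk` and kernel in `Filt ℒ`. -/
def IsWAQuot (Λ : Type) [Ring Λ] {ι : Type} (Bk : ι → Type)
    [∀ i, AddCommGroup (Bk i)] [∀ i, Module Λ (Bk i)]
    (M : Type) [AddCommGroup M] [Module Λ M] (N : Type) [AddCommGroup N] [Module Λ N] : Prop :=
  Nontrivial N ∧ InAdd Λ Bk N ∧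
    ∃ g : M →ₗ[Λ] N, Function.Surjective g ∧ ¬ Function.Injective g ∧
      HasFiltBy Λ (InAdd Λ Bk) ↥(LinearMap.ker g)

/-- `N` is a (proper, nonzero) admissible quotient of `M`: there is a surjection
`M ↠ N` which is not injective, with `N ∈ ℒ = add Bk` and kernel in `ℒ`. -/
def IsAdmQuot (Λ : Type) [Ring Λ] {ι : Type} (Bk : ι → Type)
    [∀ i, AddCommGroup (Bk i)] [∀ i, Module Λ (Bk i)]
    (M : Type) [AddCommGroup M] [Module Λ M] (N : Type) [AddCommGroup N] [Module Λ N] : Prop :=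
  Nontrivial N ∧ InAdd Λ Bk N ∧
    ∃ g : M →ₗ[Λ] N, Function.Surjective g ∧ ¬ Function.Injective g ∧
      InAdd Λ Bk ↥(LinearMap.ker g)

/-- A weakly admissible morphism: image and cokernel lie in `ℒ = add Bk`, kernel in `Filt ℒ`. -/
def IsWAHom (Λ : Type) [Ring Λ] {ι : Type} (Bk : ι → Type)
    [∀ i, AddCommGroup (Bk i)] [∀ i, Module Λ (Bk i)]
    {X Y : Type} [AddCommGroup X] [Module Λ X] [AddCommGroup Y] [Module Λ Y]
    (f : X →ₗ[Λ] Y) : Prop :=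
  InAdd Λ Bk ↥(LinearMap.range f) ∧ InAdd Λ Bk (Y ⧸ LinearMap.range f) ∧
    HasFiltBy Λ (InAdd Λ Bk) ↥(LinearMap.ker f)

/-- An admissible morphism: kernel, image and cokernel all lie in `ℒ = add Bk`. -/
def IsAdmHom (Λ : Type) [Ring Λ] {ι : Type} (Bk : ι → Type)
    [∀ i, AddCommGroup (Bk i)] [∀ i, Module Λ (Bk i)]
    {X Y : Type} [AddCommGroup X] [Module Λ X] [AddCommGroup Y] [Module Λ Y]
    (f : X →ₗ[Λ] Y) : Prop :=
  InAdd Λ Bk ↥(LinearMap.ker f) ∧ InAdd Λ Bk ↥(LinearMap.range f) ∧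
    InAdd Λ Bk (Y ⧸ LinearMap.range f)

/-- The wall `D(M)`: all `θ` with `θ(M) = 0` and `θ(M') ≥ 0` for every weakly admissible
quotient `M'` of `M`. -/
def Wall (Λ : Type) [Ring Λ] {ι : Type} (Bk : ι → Type)
    [∀ i, AddCommGroup (Bk i)] [∀ i, Module Λ (Bk i)] {n : ℕ}
    (dimv : (M : Type) → [AddCommGroup M] → [Module Λ M] → Fin n → ℕ)
    (M : Type) [AddCommGroup M] [Module Λ M] : Set (Fin n → ℝ) :=
  {θ | pr θ (dimv M) = 0 ∧
    ∀ (N : Type) [AddCommGroup N] [Module Λ N], IsWAQuot Λ Bk M N → 0 ≤ pr θ (dimv N)}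

/-- The interior `int D(M)` of the wall `D(M)`: `θ(M) = 0` and `θ(M') > 0` for every weakly
admissible quotient `M'` of `M`. -/
def IntWall (Λ : Type) [Ring Λ] {ι : Type} (Bk : ι → Type)
    [∀ i, AddCommGroup (Bk i)] [∀ i, Module Λ (Bk i)] {n : ℕ}
    (dimv : (M : Type) → [AddCommGroup M] → [Module Λ M] → Fin n → ℕ)
    (M : Type) [AddCommGroup M] [Module Λ M] : Set (Fin n → ℝ) :=
  {θ | pr θ (dimv M) = 0 ∧
    ∀ (N : Type) [AddCommGroup N] [Module Λ N], IsWAQuot Λ Bk M N → 0 < pr θ (dimv N)}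

/-- The wall `D(M)`, in the extension-closed setting: defined using admissible quotients. -/
def WallAdm (Λ : Type) [Ring Λ] {ι : Type} (Bk : ι → Type)
    [∀ i, AddCommGroup (Bk i)] [∀ i, Module Λ (Bk i)] {n : ℕ}
    (dimv : (M : Type) → [AddCommGroup M] → [Module Λ M] → Fin n → ℕ)
    (M : Type) [AddCommGroup M] [Module Λ M] : Set (Fin n → ℝ) :=
  {θ | pr θ (dimv M) = 0 ∧
    ∀ (N : Type) [AddCommGroup N] [Module Λ N], IsAdmQuot Λ Bk M N → 0 ≤ pr θ (dimv N)}

/-- The interior of `D(M)`, in the extension-closed setting. -/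
def IntWallAdm (Λ : Type) [Ring Λ] {ι : Type} (Bk : ι → Type)
    [∀ i, AddCommGroup (Bk i)] [∀ i, Module Λ (Bk i)] {n : ℕ}
    (dimv : (M : Type) → [AddCommGroup M] → [Module Λ M] → Fin n → ℕ)
    (M : Type) [AddCommGroup M] [Module Λ M] : Set (Fin n → ℝ) :=
  {θ | pr θ (dimv M) = 0 ∧
    ∀ (N : Type) [AddCommGroup N] [Module Λ N], IsAdmQuot Λ Bk M N → 0 < pr θ (dimv N)}

/-- `M ∈ S(θ)`: `M` is zero, or `M ∈ ℒ`, `θ(M) > 0` and `θ(M') > 0` for every weakly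
admissible quotient `M'` of `M`. -/
def memS (Λ : Type) [Ring Λ] {ι : Type} (Bk : ι → Type)
    [∀ i, AddCommGroup (Bk i)] [∀ i, Module Λ (Bk i)] {n : ℕ}
    (dimv : (M : Type) → [AddCommGroup M] → [Module Λ M] → Fin n → ℕ)
    (θ : Fin n → ℝ) (M : Type) [AddCommGroup M] [Module Λ M] : Prop :=
  Subsingleton M ∨ (InAdd Λ Bk M ∧ 0 < pr θ (dimv M) ∧
    ∀ (N : Type) [AddCommGroup N] [Module Λ N], IsWAQuot Λ Bk M N → 0 < pr θ (dimv N))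

/-- `M ∈ S(θ)`, in the extension-closed setting: defined using admissible quotients. -/
def memSAdm (Λ : Type) [Ring Λ] {ι : Type} (Bk : ι → Type)
    [∀ i, AddCommGroup (Bk i)] [∀ i, Module Λ (Bk i)] {n : ℕ}
    (dimv : (M : Type) → [AddCommGroup M] → [Module Λ M] → Fin n → ℕ)
    (θ : Fin n → ℝ) (M : Type) [AddCommGroup M] [Module Λ M] : Prop :=
  Subsingleton M ∨ (InAdd Λ Bk M ∧ 0 < pr θ (dimv M) ∧
    ∀ (N : Type) [AddCommGroup N] [Module Λ N], IsAdmQuot Λ Bk M N → 0 < pr θ (dimv N))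

/-- `U` is a chamber: a connected component of the complement of the union of the walls
`D(Bk i)` over the bricks of `ℒ`. -/
def IsChamber (Λ : Type) [Ring Λ] {ι : Type} (Bk : ι → Type)
    [∀ i, AddCommGroup (Bk i)] [∀ i, Module Λ (Bk i)] {n : ℕ}
    (dimv : (M : Type) → [AddCommGroup M] → [Module Λ M] → Fin n → ℕ)
    (U : Set (Fin n → ℝ)) : Prop :=
  ∃ θ ∈ (⋃ i, Wall Λ Bk dimv (Bk i))ᶜ,
    U = connectedComponentIn ((⋃ i, Wall Λ Bk dimv (Bk i))ᶜ) θ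

/-- `U` is a chamber, in the extension-closed setting. -/
def IsChamberAdm (Λ : Type) [Ring Λ] {ι : Type} (Bk : ι → Type)
    [∀ i, AddCommGroup (Bk i)] [∀ i, Module Λ (Bk i)] {n : ℕ}
    (dimv : (M : Type) → [AddCommGroup M] → [Module Λ M] → Fin n → ℕ)
    (U : Set (Fin n → ℝ)) : Prop :=
  ∃ θ ∈ (⋃ i, WallAdm Λ Bk dimv (Bk i))ᶜ,
    U = connectedComponentIn ((⋃ i, WallAdm Λ Bk dimv (Bk i))ᶜ) θ

/-- A maximal green path, relative to walls `W i` with interiors `Wi i` and pairing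
functions `pv i θ = θ(Mᵢ)`: a generic smooth path crossing the walls `W (w 1), …, W (w m)`
in their interiors, at the increasing times `t 1 < ⋯ < t m`, each in the positive direction;
it starts in the chamber containing a point with all coordinates negative and ends in the
chamber containing a point with all coordinates positive. The associated maximal green
sequence is `Bk (w 1), …, Bk (w m)`. -/
structure IsMGP {ι : Type} {n : ℕ} (W Wi : ι → Set (Fin n → ℝ)) (pv : ι → (Fin n → ℝ) → ℝ)
    (γ : ℝ → Fin n → ℝ) (m : ℕ) (t : Fin m → ℝ) (w : Fin m → ι) : Prop where
  smooth : ContDiff ℝ (⊤ : ℕ∞) γ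
  mono : StrictMono t
  cross_interior : ∀ j, γ (t j) ∈ Wi (w j)
  cross_only : ∀ s : ℝ, γ s ∈ (⋃ i, W i) → ∃ j, s = t j
  cross_pos : ∀ j, 0 < deriv (fun s => pv (w j) (γ s)) (t j)
  start_neg : ∃ s : ℝ, (∀ j, s < t j) ∧ ∃ p : Fin n → ℝ, (∀ k, p k < 0) ∧
    p ∈ connectedComponentIn ((⋃ i, W i)ᶜ) (γ s)
  end_pos : ∃ s : ℝ, (∀ j, t j < s) ∧ ∃ p : Fin n → ℝ, (∀ k, 0 < p k) ∧
    p ∈ connectedComponentIn ((⋃ i, W i)ᶜ) (γ s)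

/-- A generic smooth green path, relative to the pairing functions `pv i θ = θ(Mᵢ)` of the
relevant bricks `Mᵢ`: a smooth path `γ` with `d/dt (γ t)(Mᵢ) > 0` for all bricks and all
times, with all coordinates negative for `t ≪ 0`, on the positive side of every hyperplane
`H(Mᵢ)` for `t ≫ 0`, and crossing distinct hyperplanes at distinct times. -/
def IsGGPath {ι : Type} {n : ℕ} (pv : ι → (Fin n → ℝ) → ℝ) (γ : ℝ → Fin n → ℝ) : Prop :=
  ContDiff ℝ (⊤ : ℕ∞) γ ∧
  (∀ (i : ι) (s : ℝ), 0 < deriv (fun u => pv i (γ u)) s) ∧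
  (∃ T : ℝ, ∀ s < T, ∀ k, γ s k < 0) ∧
  (∃ T : ℝ, ∀ s > T, ∀ i : ι, 0 < pv i (γ s)) ∧
  (∀ i j : ι, ({θ : Fin n → ℝ | pv i θ = 0} ≠ {θ : Fin n → ℝ | pv j θ = 0}) →
    ∀ s s' : ℝ, pv i (γ s) = 0 → pv j (γ s') = 0 → s ≠ s')

section AuxLemmas

lemma pr_line {n : ℕ} (θ : Fin n → ℝ) (c : ℝ) (d : Fin n → ℕ) :
    pr (θ + c • (fun _ => (1 : ℝ))) d = pr θ d + c * ∑ k, (d k : ℝ) := by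
  simp only [pr, Pi.add_apply, Pi.smul_apply, smul_eq_mul, mul_one, add_mul,
    Finset.sum_add_distrib, Finset.mul_sum]

lemma pr_add {n : ℕ} (θ : Fin n → ℝ) (a b : Fin n → ℕ) : pr θ (a + b) = pr θ a + pr θ b := by
  simp [pr, mul_add, Finset.sum_add_distrib]

lemma pr_zero {n : ℕ} (θ : Fin n → ℝ) : pr θ 0 = 0 := by simp [pr]

lemma pr_sum_nat {n : ℕ} (θ : Fin n → ℝ) {α : Type} (s : Finset α) (v : α → Fin n → ℕ) :
    pr θ (∑ j ∈ s, v j) = ∑ j ∈ s, pr θ (v j) := by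
  simp only [pr, Finset.sum_apply, Nat.cast_sum, Finset.mul_sum]
  exact Finset.sum_comm

variable {Λ : Type} [Ring Λ] {ι : Type} {Bk : ι → Type}
  [∀ i, AddCommGroup (Bk i)] [∀ i, Module Λ (Bk i)]

lemma InAdd.of_equiv {M M' : Type} [AddCommGroup M] [Module Λ M] [AddCommGroup M'] [Module Λ M']
    (h : InAdd Λ Bk M) (e : M ≃ₗ[Λ] M') : InAdd Λ Bk M' := by
  obtain ⟨k, f, ⟨E⟩⟩ := h
  exact ⟨k, f, ⟨e.symm.trans E⟩⟩

lemma InAdd.of_subsingleton (M : Type) [AddCommGroup M] [Module Λ M] (h : Subsingleton M) :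
    InAdd Λ Bk M := by
  haveI := h
  exact ⟨0, Fin.elim0, ⟨LinearEquiv.ofSubsingleton _ _⟩⟩

lemma InAdd.single (i : ι) : InAdd Λ Bk (Bk i) :=
  ⟨1, fun _ => i, ⟨(LinearEquiv.funUnique (Fin 1) Λ (Bk i)).symm⟩⟩

lemma InAdd.pi (k : ℕ) (f : Fin k → ι) : InAdd Λ Bk ((j : Fin k) → Bk (f j)) :=
  ⟨k, f, ⟨LinearEquiv.refl _ _⟩⟩

lemma InAdd.finite [∀ i, Module.Finite Λ (Bk i)] {M : Type} [AddCommGroup M] [Module Λ M]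
    (h : InAdd Λ Bk M) : Module.Finite Λ M := by
  obtain ⟨k, f, ⟨E⟩⟩ := h
  exact Module.Finite.equiv E.symm

lemma subquot_congr {A B : Type} [AddCommGroup A] [Module Λ A] [AddCommGroup B] [Module Λ B]
    (f : A →ₗ[Λ] B) {p q : Submodule Λ A} {p' q' : Submodule Λ B}
    (hq' : Submodule.map f q = q') (hker : ∀ x ∈ q, (f x ∈ p' ↔ x ∈ p)) :
    Nonempty ((↥q ⧸ Submodule.comap q.subtype p) ≃ₗ[Λ] (↥q' ⧸ Submodule.comap q'.subtype p')) := by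
  have hmap : ∀ x : q, f x ∈ q' := fun x => hq' ▸ Submodule.mem_map_of_mem x.2
  let g : ↥q →ₗ[Λ] ↥q' := f.restrict (fun x hx => hmap ⟨x, hx⟩)
  let F : ↥q →ₗ[Λ] (↥q' ⧸ Submodule.comap q'.subtype p') := (Submodule.comap q'.subtype p').mkQ ∘ₗ g
  have hFs : Function.Surjective F := by
    apply Function.Surjective.comp (Submodule.mkQ_surjective _)
    rintro ⟨y, hy⟩
    rw [← hq'] at hy
    obtain ⟨x, hx, rfl⟩ := hy
    exact ⟨⟨x, hx⟩, rfl⟩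
  have hFk : LinearMap.ker F = Submodule.comap q.subtype p := by
    ext x
    simp only [F, g, LinearMap.mem_ker, LinearMap.comp_apply, Submodule.mkQ_apply,
      Submodule.Quotient.mk_eq_zero, Submodule.mem_comap, Submodule.coe_subtype,
      LinearMap.restrict_apply]
    exact hker x.1 x.2
  exact ⟨(Submodule.quotEquivOfEq _ _ hFk.symm).trans (F.quotKerEquivOfSurjective hFs)⟩


lemma filt_congr {M M' : Type} [AddCommGroup M] [Module Λ M] [AddCommGroup M'] [Module Λ M']
    (e : M ≃ₗ[Λ] M') (h : HasFiltBy Λ (InAdd Λ Bk) M) : HasFiltBy Λ (InAdd Λ Bk) M' := by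
  obtain ⟨k, s, hmono, hbot, htop, hsub⟩ := h
  refine ⟨k, fun i => (s i).map e.toLinearMap, fun i j hij => Submodule.map_mono (hmono hij),
    ?_, ?_, ?_⟩
  · show (s 0).map e.toLinearMap = ⊥
    rw [hbot, Submodule.map_bot]
  · show (s (Fin.last k)).map e.toLinearMap = ⊤
    rw [htop, Submodule.map_top, LinearEquiv.range]
  · intro i
    obtain ⟨E⟩ := subquot_congr (p := s i.castSucc) (q := s i.succ)
      (p' := (s i.castSucc).map e.toLinearMap) (q' := (s i.succ).map e.toLinearMap)
      e.toLinearMap rfl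
      (fun x _ => by
        constructor
        · rintro ⟨y, hy, hxy⟩
          rwa [← e.injective hxy]
        · intro hx; exact Submodule.mem_map_of_mem hx)
    exact (hsub i).of_equiv E

lemma filt_of_subsingleton (M : Type) [AddCommGroup M] [Module Λ M] (h : Subsingleton M) :
    HasFiltBy Λ (InAdd Λ Bk) M := by
  haveI := (Submodule.subsingleton_iff Λ (M := M)).mpr h
  exact ⟨0, fun _ => ⊥, monotone_const, rfl, Subsingleton.elim _ _, fun i => i.elim0⟩

lemma filt_of_inadd {M : Type} [AddCommGroup M] [Module Λ M] (h : InAdd Λ Bk M) :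
    HasFiltBy Λ (InAdd Λ Bk) M := by
  refine ⟨1, fun i => if i = 0 then ⊥ else ⊤, ?_, if_pos rfl, if_neg (by decide), ?_⟩
  · intro a b hab
    by_cases ha : a = 0
    · simp [ha]
    · have hb : b ≠ 0 := by
        intro hb0
        exact ha (le_antisymm (hb0 ▸ hab) (Fin.zero_le a))
      simp [ha, hb]
  · intro i
    have h0 : i.succ ≠ 0 := Fin.succ_ne_zero i
    have h1 : i.castSucc = 0 := by
      have : i = 0 := Subsingleton.elim i 0
      rw [this]; rfl
    have hs : (if i.succ = 0 then (⊥ : Submodule Λ M) else ⊤) = ⊤ := if_neg h0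
    have hc : (if i.castSucc = 0 then (⊥ : Submodule Λ M) else ⊤) = ⊥ := by
      rw [h1]; exact if_pos rfl
    show InAdd Λ Bk (↥(if i.succ = 0 then (⊥ : Submodule Λ M) else ⊤) ⧸ Submodule.comap
      (if i.succ = 0 then (⊥ : Submodule Λ M) else ⊤).subtype
      (if i.castSucc = 0 then (⊥ : Submodule Λ M) else ⊤))
    rw [hs, hc]
    have e1 : (↥(⊤ : Submodule Λ M) ⧸ Submodule.comap (⊤ : Submodule Λ M).subtype
        (⊥ : Submodule Λ M)) ≃ₗ[Λ] ↥(⊤ : Submodule Λ M) :=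
      Submodule.quotEquivOfEqBot _ (by rw [Submodule.comap_bot, Submodule.ker_subtype])
    have e2 : M ≃ₗ[Λ] ↥(⊤ : Submodule Λ M) := Submodule.topEquiv.symm
    exact h.of_equiv (e2.trans e1.symm)

lemma subquot_eq_transfer {M : Type} [AddCommGroup M] [Module Λ M] {a a' b b' : Submodule Λ M}
    (ha : a = a') (hb : b = b')
    (h : InAdd Λ Bk (↥a ⧸ Submodule.comap a.subtype b)) :
    InAdd Λ Bk (↥a' ⧸ Submodule.comap a'.subtype b') := by
  subst ha; subst hb; exact h

lemma ker_comp_filt {X Y Z : Type} [AddCommGroup X] [Module Λ X] [AddCommGroup Y] [Module Λ Y]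
    [AddCommGroup Z] [Module Λ Z] (ϕ : X →ₗ[Λ] Y) (ψ : Y →ₗ[Λ] Z)
    (hϕ : Function.Surjective ϕ)
    (h1 : HasFiltBy Λ (InAdd Λ Bk) ↥(LinearMap.ker ϕ))
    (h2 : HasFiltBy Λ (InAdd Λ Bk) ↥(LinearMap.ker ψ)) :
    HasFiltBy Λ (InAdd Λ Bk) ↥(LinearMap.ker (ψ ∘ₗ ϕ)) := by
  set W := LinearMap.ker (ψ ∘ₗ ϕ) with hW
  have hVW : LinearMap.ker ϕ ≤ W := by
    intro x hx
    have hx0 : ϕ x = 0 := hx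
    simp only [hW, LinearMap.mem_ker, LinearMap.comp_apply, hx0, map_zero]
  set incl : ↥(LinearMap.ker ϕ) →ₗ[Λ] ↥W := Submodule.inclusion hVW with hincl
  have hπmem : ∀ x ∈ W, ϕ x ∈ LinearMap.ker ψ := fun x hx => hx
  set π : ↥W →ₗ[Λ] ↥(LinearMap.ker ψ) := ϕ.restrict hπmem with hπ
  have hπs : Function.Surjective π := by
    rintro ⟨y, hy⟩
    obtain ⟨x, rfl⟩ := hϕ y
    exact ⟨⟨x, hy⟩, rfl⟩
  have hπk : LinearMap.ker π = Submodule.comap W.subtype (LinearMap.ker ϕ) := by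
    ext x
    simp only [hπ, LinearMap.mem_ker, Submodule.mem_comap, Submodule.coe_subtype]
    constructor
    · intro hx
      have := congrArg (Submodule.subtype _) hx
      simpa [LinearMap.restrict_apply] using this
    · intro hx
      apply Subtype.ext
      simpa [LinearMap.restrict_apply] using hx
  have hrange : LinearMap.range incl = Submodule.comap W.subtype (LinearMap.ker ϕ) :=
    Submodule.range_inclusion _ _ _
  obtain ⟨k₁, s, hs_mono, hs_bot, hs_top, hs_sub⟩ := h1
  obtain ⟨k₂, t, ht_mono, ht_bot, ht_top, ht_sub⟩ := h2
  set u : Fin (k₁ + k₂ + 1) → Submodule Λ ↥W := fun i =>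
    if h : (i : ℕ) ≤ k₁ then (s ⟨i, by omega⟩).map incl
    else (t ⟨(i : ℕ) - k₁, by omega⟩).comap π with hu
  have hlow : ∀ (i : Fin (k₁ + k₂ + 1)) (hm : (i : ℕ) ≤ k₁),
      u i = (s ⟨i, by omega⟩).map incl := fun i hm => dif_pos hm
  have hhigh : ∀ (i : Fin (k₁ + k₂ + 1)) (hm : k₁ ≤ (i : ℕ)),
      u i = (t ⟨(i : ℕ) - k₁, by omega⟩).comap π := by
    intro i hm
    rcases Nat.eq_or_lt_of_le hm with he | hl
    · rw [hlow i (le_of_eq he.symm)]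
      have e1 : (⟨(i : ℕ), by omega⟩ : Fin (k₁+1)) = Fin.last k₁ := by
        ext; simp [← he]
      have e2 : (⟨(i : ℕ) - k₁, by omega⟩ : Fin (k₂+1)) = 0 := by
        ext; simp [← he]
      rw [e1, hs_top, e2, ht_bot, Submodule.map_top, hrange, Submodule.comap_bot, hπk]
    · rw [hu]
      exact dif_neg (by omega)
  refine ⟨k₁ + k₂, u, ?_, ?_, ?_, ?_⟩
  · rw [Fin.monotone_iff_le_succ]
    intro i
    have hcs : (i.castSucc : ℕ) = (i : ℕ) := rfl
    have hsc : (i.succ : ℕ) = (i : ℕ) + 1 := rfl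
    by_cases hi : (i : ℕ) + 1 ≤ k₁
    · rw [hlow i.castSucc (by omega),
        hlow i.succ (by omega)]
      apply Submodule.map_mono
      apply hs_mono
      rw [Fin.mk_le_mk]
      omega
    · rw [hhigh i.castSucc (by omega),
        hhigh i.succ (by omega)]
      apply Submodule.comap_mono
      apply ht_mono
      rw [Fin.mk_le_mk]
      omega
  · rw [hlow 0 (by simp only [Fin.val_zero]; omega)]
    have e0 : (⟨((0 : Fin (k₁ + k₂ + 1)) : ℕ), by simp only [Fin.val_zero]; omega⟩ : Fin (k₁+1)) = 0 := by
      ext; simp only [Fin.val_zero]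
    rw [e0, hs_bot, Submodule.map_bot]
  · rw [hhigh (Fin.last (k₁ + k₂)) (by simp only [Fin.val_last]; omega)]
    have e0 : (⟨((Fin.last (k₁ + k₂) : Fin (k₁ + k₂ + 1)) : ℕ) - k₁, by omega⟩ : Fin (k₂+1))
        = Fin.last k₂ := by ext; simp only [Fin.val_last]; omega
    rw [e0, ht_top, Submodule.comap_top]
  · intro i
    have hcs : (i.castSucc : ℕ) = (i : ℕ) := rfl
    have hsc : (i.succ : ℕ) = (i : ℕ) + 1 := rfl
    by_cases hi : (i : ℕ) + 1 ≤ k₁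
    · have hj : (i : ℕ) < k₁ := by omega
      refine subquot_eq_transfer (hlow i.succ (by omega)).symm
        (hlow i.castSucc (by omega)).symm ?_
      obtain ⟨E⟩ := subquot_congr
        (p := s ⟨(i.castSucc : ℕ), by omega⟩) (q := s ⟨(i.succ : ℕ), by omega⟩)
        (p' := (s ⟨(i.castSucc : ℕ), by omega⟩).map incl)
        (q' := (s ⟨(i.succ : ℕ), by omega⟩).map incl)
        incl rfl
        (fun x _ => by
          constructor
          · rintro ⟨y, hy, hxy⟩
            rwa [← Submodule.inclusion_injective hVW hxy]
          · intro hx; exact Submodule.mem_map_of_mem hx)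
      exact (hs_sub ⟨(i : ℕ), hj⟩).of_equiv E
    · have hik : k₁ ≤ (i : ℕ) := by omega
      have hjlt : (i : ℕ) - k₁ < k₂ := by omega
      have hA : u i.succ = (t ((⟨(i : ℕ) - k₁, hjlt⟩ : Fin k₂).succ)).comap π := by
        rw [hhigh i.succ (by omega)]
        have he : (⟨(i.succ : ℕ) - k₁, by omega⟩ : Fin (k₂+1))
            = (⟨(i : ℕ) - k₁, hjlt⟩ : Fin k₂).succ := by
          apply Fin.ext
          show (i.succ : ℕ) - k₁ = (i : ℕ) - k₁ + 1
          omega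
        rw [he]
      have hB : u i.castSucc = (t ((⟨(i : ℕ) - k₁, hjlt⟩ : Fin k₂).castSucc)).comap π := by
        rw [hhigh i.castSucc (by omega)]
        have he : (⟨(i.castSucc : ℕ) - k₁, by omega⟩ : Fin (k₂+1))
            = (⟨(i : ℕ) - k₁, hjlt⟩ : Fin k₂).castSucc := by
          apply Fin.ext
          show (i.castSucc : ℕ) - k₁ = (i : ℕ) - k₁
          omega
        rw [he]
      refine subquot_eq_transfer hA.symm hB.symm ?_
      obtain ⟨E⟩ := subquot_congr
        (p := (t ((⟨(i : ℕ) - k₁, hjlt⟩ : Fin k₂).castSucc)).comap π)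
        (q := (t ((⟨(i : ℕ) - k₁, hjlt⟩ : Fin k₂).succ)).comap π)
        (p' := t ((⟨(i : ℕ) - k₁, hjlt⟩ : Fin k₂).castSucc))
        (q' := t ((⟨(i : ℕ) - k₁, hjlt⟩ : Fin k₂).succ))
        π (Submodule.map_comap_eq_of_surjective hπs _)
        (fun x _ => Iff.rfl)
      exact (ht_sub ⟨(i : ℕ) - k₁, hjlt⟩).of_equiv E.symm
end AuxLemmas

section PiAux

variable {Λ : Type} [Ring Λ] {ι : Type} {Bk : ι → Type}
  [∀ i, AddCommGroup (Bk i)] [∀ i, Module Λ (Bk i)]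

/-- The projection to the tail of a finite product. -/
def tailMap {m : ℕ} (g : Fin (m+1) → ι) :
    ((j : Fin (m+1)) → Bk (g j)) →ₗ[Λ] ((j : Fin m) → Bk (g j.succ)) :=
  LinearMap.pi fun j => LinearMap.proj j.succ

lemma tailMap_surjective {m : ℕ} (g : Fin (m+1) → ι) :
    Function.Surjective (tailMap (Λ := Λ) (Bk := Bk) g) := by
  intro h
  refine ⟨Fin.cases 0 h, ?_⟩
  funext j
  simp [tailMap, LinearMap.pi_apply]

/-- Extension by zero in the head coordinate. -/
def consZeroMap {m : ℕ} (g : Fin (m+1) → ι) :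
    ((j : Fin m) → Bk (g j.succ)) →ₗ[Λ] ((j : Fin (m+1)) → Bk (g j)) where
  toFun h := Fin.cases 0 h
  map_add' x y := by
    funext j
    induction j using Fin.cases <;> simp
  map_smul' r x := by
    funext j
    induction j using Fin.cases <;> simp

lemma consZeroMap_apply {m : ℕ} (g : Fin (m+1) → ι) (h : (j : Fin m) → Bk (g j.succ)) :
    consZeroMap (Λ := Λ) g h = Fin.cases 0 h := rfl

lemma range_single_eq_ker_tailMap {m : ℕ} (g : Fin (m+1) → ι) :
    LinearMap.range (LinearMap.single Λ (fun j => Bk (g j)) 0)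
      = LinearMap.ker (tailMap (Λ := Λ) (Bk := Bk) g) := by
  ext x
  simp only [LinearMap.mem_range, LinearMap.mem_ker, tailMap]
  constructor
  · rintro ⟨b, rfl⟩
    funext j
    simp [LinearMap.pi_apply, LinearMap.coe_single, Pi.single_eq_of_ne (Fin.succ_ne_zero j)]
  · intro hx
    refine ⟨x 0, ?_⟩
    funext j
    induction j using Fin.cases with
    | zero => simp [LinearMap.coe_single]
    | succ jj =>
      have := congrFun hx jj
      simp only [LinearMap.pi_apply, LinearMap.proj_apply, Pi.zero_apply] at this
      simp [LinearMap.coe_single, Pi.single_eq_of_ne (Fin.succ_ne_zero jj), this]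

lemma single_injective' {m : ℕ} (g : Fin (m+1) → ι) :
    Function.Injective (LinearMap.single Λ (fun j => Bk (g j)) 0) := by
  intro a b hab
  have := congrFun hab 0
  simpa using this

lemma ker_tailMap_filt {m : ℕ} (g : Fin (m+1) → ι) :
    HasFiltBy Λ (InAdd Λ Bk) ↥(LinearMap.ker (tailMap (Λ := Λ) (Bk := Bk) g)) := by
  have hinj := single_injective' (Λ := Λ) (Bk := Bk) g
  have E : Bk (g 0) ≃ₗ[Λ] ↥(LinearMap.ker (tailMap (Λ := Λ) (Bk := Bk) g)) := by
    refine (LinearEquiv.ofInjective _ hinj).trans (LinearEquiv.ofEq _ _ ?_)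
    exact range_single_eq_ker_tailMap g
  exact filt_congr E (filt_of_inadd (InAdd.single (g 0)))

lemma proj_surjective' {k : ℕ} (g : Fin k → ι) (j₀ : Fin k) :
    Function.Surjective (LinearMap.proj (R := Λ) (φ := fun j => Bk (g j)) j₀) := by
  intro b
  refine ⟨Pi.single j₀ b, ?_⟩
  simp [LinearMap.proj_apply]

lemma pi_quot {k : ℕ} (g : Fin k → ι) (j₀ : Fin k) :
    ∃ π : ((j : Fin k) → Bk (g j)) →ₗ[Λ] Bk (g j₀),
      Function.Surjective π ∧ HasFiltBy Λ (InAdd Λ Bk) ↥(LinearMap.ker π) := by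
  induction k with
  | zero => exact j₀.elim0
  | succ m IH =>
    induction j₀ using Fin.cases with
    | zero =>
      refine ⟨LinearMap.proj 0, proj_surjective' g 0, ?_⟩
      have hcmem : ∀ h, consZeroMap (Λ := Λ) g h ∈
          LinearMap.ker (LinearMap.proj (R := Λ) (φ := fun j => Bk (g j)) (0 : Fin (m+1))) := by
        intro h
        simp [LinearMap.mem_ker, consZeroMap_apply]
      have E : ((j : Fin m) → Bk (g j.succ)) ≃ₗ[Λ]
          ↥(LinearMap.ker (LinearMap.proj (R := Λ) (φ := fun j => Bk (g j)) (0 : Fin (m+1)))) := by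
        refine LinearEquiv.ofLinear
          (LinearMap.codRestrict _ (consZeroMap g) hcmem)
          ((tailMap g) ∘ₗ (Submodule.subtype _)) ?_ ?_
        · apply LinearMap.ext
          rintro ⟨x, hx⟩
          apply Subtype.ext
          have hx0 : x 0 = 0 := hx
          funext j
          induction j using Fin.cases with
          | zero =>
            simp [consZeroMap_apply, LinearMap.codRestrict_apply, tailMap,
              LinearMap.pi_apply, hx0]
          | succ jj =>
            simp [consZeroMap_apply, LinearMap.codRestrict_apply, tailMap,
              LinearMap.pi_apply]
        · apply LinearMap.ext
          intro h
          funext j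
          simp [consZeroMap_apply, LinearMap.codRestrict_apply, tailMap, LinearMap.pi_apply]
      exact filt_congr E (filt_of_inadd (InAdd.pi m (fun j => g j.succ)))
    | succ j =>
      obtain ⟨π', hs', hk'⟩ := IH (fun j => g j.succ) j
      exact ⟨π' ∘ₗ tailMap g, hs'.comp (tailMap_surjective g),
        ker_comp_filt _ _ (tailMap_surjective g) (ker_tailMap_filt g) hk'⟩

end PiAux

section DimAux

variable {Λ : Type} [Ring Λ] {ι : Type} {Bk : ι → Type}
  [∀ i, AddCommGroup (Bk i)] [∀ i, Module Λ (Bk i)] [∀ i, Module.Finite Λ (Bk i)]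
  {n : ℕ} {dimv : (M : Type) → [AddCommGroup M] → [Module Λ M] → Fin n → ℕ}
  (hdim_zero : ∀ (M : Type) [AddCommGroup M] [Module Λ M] [Module.Finite Λ M],
      dimv M = 0 ↔ Subsingleton M)
  (hdim_add : ∀ (A B C : Type) [AddCommGroup A] [Module Λ A] [AddCommGroup B] [Module Λ B]
      [AddCommGroup C] [Module Λ C] [Module.Finite Λ B] (f : A →ₗ[Λ] B) (g : B →ₗ[Λ] C),
      Function.Injective f → Function.Surjective g → LinearMap.range f = LinearMap.ker g →
      dimv B = dimv A + dimv C)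

include hdim_zero hdim_add in
lemma dim_of_equiv {A B : Type} [AddCommGroup A] [Module Λ A] [AddCommGroup B] [Module Λ B]
    [Module.Finite Λ B] (e : A ≃ₗ[Λ] B) : dimv A = dimv B := by
  have h := hdim_add A B (B ⧸ LinearMap.range (e : A →ₗ[Λ] B)) (e : A →ₗ[Λ] B)
    (LinearMap.range (e : A →ₗ[Λ] B)).mkQ e.injective (Submodule.mkQ_surjective _)
    (Submodule.ker_mkQ _).symm
  have hz : dimv (B ⧸ LinearMap.range (e : A →ₗ[Λ] B)) = 0 := by
    refine (hdim_zero _).mpr ?_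
    rw [LinearEquiv.range]
    exact Submodule.Quotient.subsingleton_iff.mpr rfl
  rw [h, hz, add_zero]

include hdim_zero hdim_add in
lemma dim_pi : ∀ (k : ℕ) (g : Fin k → ι),
    dimv ((j : Fin k) → Bk (g j)) = ∑ j, dimv (Bk (g j)) := by
  intro k
  induction k with
  | zero =>
    intro g
    rw [Finset.univ_eq_empty, Finset.sum_empty]
    exact (hdim_zero _).mpr inferInstance
  | succ m IH =>
    intro g
    have h := hdim_add (Bk (g 0)) ((j : Fin (m+1)) → Bk (g j)) ((j : Fin m) → Bk (g j.succ))
      (LinearMap.single Λ (fun j => Bk (g j)) 0) (tailMap g)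
      (single_injective' (Λ := Λ) (Bk := Bk) g) (tailMap_surjective g)
      (range_single_eq_ker_tailMap g)
    rw [h, IH (fun j => g j.succ), Fin.sum_univ_succ]

include hdim_zero in
lemma sum_dim_pos {M : Type} [AddCommGroup M] [Module Λ M] [Module.Finite Λ M]
    (h : Nontrivial M) : 0 < ∑ kk, (dimv M kk : ℝ) := by
  have hd : dimv M ≠ 0 := fun h0 => (not_subsingleton M) ((hdim_zero M).mp h0)
  obtain ⟨kk, hkk⟩ := Function.ne_iff.mp hd
  refine Finset.sum_pos' (fun _ _ => by positivity) ⟨kk, Finset.mem_univ kk, ?_⟩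
  have h1 : 0 < dimv M kk := Nat.pos_of_ne_zero (by simpa using hkk)
  exact_mod_cast h1

include hdim_zero in
lemma sum_dim_nat_pos {M : Type} [AddCommGroup M] [Module Λ M] [Module.Finite Λ M]
    (h : Nontrivial M) : 0 < ∑ kk, dimv M kk := by
  rcases Nat.eq_zero_or_pos (∑ kk, dimv M kk) with h0 | h1
  · exfalso
    have hz : dimv M = 0 := by
      funext kk
      exact Finset.sum_eq_zero_iff.mp h0 kk (Finset.mem_univ kk)
    exact not_subsingleton M ((hdim_zero M).mp hz)
  · exact h1

include hdim_zero hdim_add in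
lemma exists_component (θ : Fin n → ℝ) {N : Type} [AddCommGroup N] [Module Λ N]
    (hN : InAdd Λ Bk N) (hnt : Nontrivial N) (hneg : pr θ (dimv N) ≤ 0) :
    ∃ (i : ι) (π : N →ₗ[Λ] Bk i), Function.Surjective π ∧
      HasFiltBy Λ (InAdd Λ Bk) ↥(LinearMap.ker π) ∧ pr θ (dimv (Bk i)) ≤ 0 ∧
      (∀ kk, dimv (Bk i) kk ≤ dimv N kk) := by
  obtain ⟨k, g, ⟨E⟩⟩ := hN
  have hdim : dimv N = ∑ j, dimv (Bk (g j)) := by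
    rw [dim_of_equiv hdim_zero hdim_add E]
    exact dim_pi hdim_zero hdim_add k g
  have hk : k ≠ 0 := by
    rintro rfl
    haveI : Subsingleton ((j : Fin 0) → Bk (g j)) := inferInstance
    haveI : Subsingleton N := E.toEquiv.subsingleton
    exact not_subsingleton N inferInstance
  haveI : Nonempty (Fin k) := ⟨⟨0, Nat.pos_of_ne_zero hk⟩⟩
  have hsum : ∑ j, pr θ (dimv (Bk (g j))) ≤ 0 := by
    rw [← pr_sum_nat, ← hdim]
    exact hneg
  have hex : ∃ j₀ : Fin k, pr θ (dimv (Bk (g j₀))) ≤ 0 := by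
    by_contra hcon
    push_neg at hcon
    have := Finset.sum_pos (fun j _ => hcon j) Finset.univ_nonempty
    linarith
  obtain ⟨j₀, hj₀⟩ := hex
  obtain ⟨π₀, hπ₀s, hπ₀k⟩ := pi_quot (Λ := Λ) (Bk := Bk) g j₀
  refine ⟨g j₀, π₀ ∘ₗ (E : N →ₗ[Λ] _), hπ₀s.comp E.surjective, ?_, hj₀, ?_⟩
  · refine ker_comp_filt _ _ E.surjective (filt_of_subsingleton _ ?_) hπ₀k
    exact Submodule.subsingleton_iff_eq_bot.mpr E.ker
  · intro kk
    have : dimv N kk = ∑ j, dimv (Bk (g j)) kk := by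
      rw [hdim, Finset.sum_apply]
    rw [this]
    exact Finset.single_le_sum (f := fun j => dimv (Bk (g j)) kk)
      (fun _ _ => Nat.zero_le _) (Finset.mem_univ j₀)

end DimAux

/-- If chambers `U, U'` are separated by the wall `D(M)` (`U` on the negative
side, `U'` on the positive side), then (a) for any `X ∈ S(U)` there is no nonzero weakly
admissible morphism `X → M`, and (b) if `X ∉ S(U)` but `X ∈ S(U')` then there is a nonzero
weakly admissible epimorphism `X ↠ M`. -/
theorem stmt6
    (K : Type) [Field K] (Λ : Type) [Ring Λ] [Algebra K Λ] [FiniteDimensional K Λ]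
    {ι : Type} [Fintype ι] (Bk : ι → Type)
    [∀ i, AddCommGroup (Bk i)] [∀ i, Module Λ (Bk i)] [∀ i, Module.Finite Λ (Bk i)]
    {n : ℕ}
    (dimv : (M : Type) → [AddCommGroup M] → [Module Λ M] → Fin n → ℕ)
    (hbrick : ∀ i, IsBrick Λ (Bk i))
    (hindep : ∀ i j : ι, i ≠ j →
      LinearIndependent ℝ ![fun k => ((dimv (Bk i) k : ℝ)), fun k => ((dimv (Bk j) k : ℝ))])
    (hdim_zero : ∀ (M : Type) [AddCommGroup M] [Module Λ M] [Module.Finite Λ M],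
      dimv M = 0 ↔ Subsingleton M)
    (hdim_add : ∀ (A B C : Type) [AddCommGroup A] [Module Λ A] [AddCommGroup B] [Module Λ B]
      [AddCommGroup C] [Module Λ C] [Module.Finite Λ B] (f : A →ₗ[Λ] B) (g : B →ₗ[Λ] C),
      Function.Injective f → Function.Surjective g → LinearMap.range f = LinearMap.ker g →
      dimv B = dimv A + dimv C)
    (i₀ : ι) (θ₀ : Fin n → ℝ)
    (hθ₀ : θ₀ ∈ IntWall Λ Bk dimv (Bk i₀))
    (hgen : ∀ j, j ≠ i₀ → θ₀ ∉ Wall Λ Bk dimv (Bk j))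
    (U U' : Set (Fin n → ℝ))
    (hU : IsChamber Λ Bk dimv U) (hU' : IsChamber Λ Bk dimv U')
    (η : Fin n → ℝ) (hη : η = fun _ => 1)
    (ε : ℝ) (hε : 0 < ε)
    (hsmall : ∀ ε' : ℝ, 0 < ε' → ε' ≤ ε → (θ₀ - ε' • η) ∈ U ∧ (θ₀ + ε' • η) ∈ U') :
    (∀ (X : Type) [AddCommGroup X] [Module Λ X],
      memS Λ Bk dimv (θ₀ - ε • η) X →
        ∀ f : X →ₗ[Λ] Bk i₀, IsWAHom Λ Bk f → f = 0) ∧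
    (∀ (X : Type) [AddCommGroup X] [Module Λ X],
      ¬ memS Λ Bk dimv (θ₀ - ε • η) X → memS Λ Bk dimv (θ₀ + ε • η) X →
        ∃ f : X →ₗ[Λ] Bk i₀, f ≠ 0 ∧ Function.Surjective f ∧ IsWAHom Λ Bk f) := by
  subst hη
  obtain ⟨hw1, hw2⟩ := hθ₀
  haveI hNoethK : IsNoetherian K Λ := inferInstance
  haveI hNoeth : IsNoetherianRing Λ := isNoetherian_of_tower K hNoethK
  have finsub : ∀ (M : Type) [AddCommGroup M] [Module Λ M] [Module.Finite Λ M]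
      (p : Submodule Λ M), Module.Finite Λ ↥p := by
    intro M _ _ _ p
    haveI : IsNoetherian Λ M := isNoetherian_of_isNoetherianRing_of_finite Λ M
    exact Module.Finite.iff_fg.mpr (IsNoetherian.noetherian p)
  set θm := θ₀ - ε • (fun _ => (1 : ℝ)) with hθm
  set θp := θ₀ + ε • (fun _ => (1 : ℝ)) with hθp
  have prm : ∀ d : Fin n → ℕ, pr θm d = pr θ₀ d - ε * ∑ kk, (d kk : ℝ) := by
    intro d
    rw [hθm, sub_eq_add_neg, ← neg_smul, pr_line]
    ring
  have prp : ∀ d : Fin n → ℕ, pr θp d = pr θ₀ d + ε * ∑ kk, (d kk : ℝ) := by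
    intro d
    rw [hθp, pr_line]
  have Snn : ∀ d : Fin n → ℕ, 0 ≤ ∑ kk, (d kk : ℝ) :=
    fun d => Finset.sum_nonneg (fun _ _ => by positivity)
  constructor
  · -- Part (a)
    intro X iX1 iX2 hX f hf
    by_cases hXs : Subsingleton X
    · apply LinearMap.ext
      intro x
      simp [Subsingleton.elim x 0]
    by_contra hf0
    have hX' := (show Subsingleton X ∨ _ from hX).resolve_left hXs
    obtain ⟨hXadd, hXpos, hXq⟩ := hX'
    haveI : Module.Finite Λ X := hXadd.finite
    obtain ⟨hIm, hCok, hKer⟩ := hf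
    have hRne : LinearMap.range f ≠ ⊥ := fun h => hf0 (LinearMap.range_eq_bot.mp h)
    haveI hRnt : Nontrivial ↥(LinearMap.range f) := Submodule.nontrivial_iff_ne_bot.mpr hRne
    haveI : Module.Finite Λ ↥(LinearMap.range f) := finsub _ _
    haveI : Module.Finite Λ ↥(LinearMap.ker f) := finsub _ _
    have hdimX : dimv X = dimv ↥(LinearMap.ker f) + dimv ↥(LinearMap.range f) :=
      hdim_add _ _ _ (LinearMap.ker f).subtype f.rangeRestrict (Submodule.injective_subtype _)
        f.surjective_rangeRestrict (by rw [Submodule.range_subtype, LinearMap.ker_rangeRestrict])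
    have claim1 : 0 < pr θm (dimv ↥(LinearMap.range f)) := by
      by_cases hkf : LinearMap.ker f = ⊥
      · have hz : dimv ↥(LinearMap.ker f) = 0 := by
          refine (hdim_zero _).mpr ?_
          rw [hkf]
          exact Submodule.subsingleton_iff_eq_bot.mpr rfl
        rw [hdimX, hz, zero_add] at hXpos
        exact hXpos
      · refine hXq ↥(LinearMap.range f)
          ⟨hRnt, hIm, f.rangeRestrict, f.surjective_rangeRestrict, ?_, ?_⟩
        · intro hinj
          exact hkf (by rw [← LinearMap.ker_rangeRestrict f]; exact LinearMap.ker_eq_bot.mpr hinj)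
        · rw [LinearMap.ker_rangeRestrict]
          exact hKer
    have hdimB : dimv (Bk i₀) = dimv ↥(LinearMap.range f) + dimv (Bk i₀ ⧸ LinearMap.range f) :=
      hdim_add _ _ _ (LinearMap.range f).subtype (LinearMap.range f).mkQ
        (Submodule.injective_subtype _) (Submodule.mkQ_surjective _)
        (by rw [Submodule.range_subtype, Submodule.ker_mkQ])
    have hQnn : 0 ≤ pr θ₀ (dimv (Bk i₀ ⧸ LinearMap.range f)) := by
      by_cases hRtop : LinearMap.range f = ⊤
      · have hz : dimv (Bk i₀ ⧸ LinearMap.range f) = 0 := by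
          refine (hdim_zero _).mpr ?_
          exact Submodule.Quotient.subsingleton_iff.mpr hRtop
        rw [hz, pr_zero]
      · refine le_of_lt (hw2 (Bk i₀ ⧸ LinearMap.range f)
          ⟨?_, hCok, (LinearMap.range f).mkQ, Submodule.mkQ_surjective _, ?_, ?_⟩)
        · exact Submodule.Quotient.nontrivial_iff.2 hRtop
        · intro hinj
          have hkb : LinearMap.ker (LinearMap.range f).mkQ = ⊥ := LinearMap.ker_eq_bot.mpr hinj
          rw [Submodule.ker_mkQ] at hkb
          exact hRne hkb
        · rw [Submodule.ker_mkQ]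
          exact filt_of_inadd hIm
    have hsplit : pr θ₀ (dimv (Bk i₀))
        = pr θ₀ (dimv ↥(LinearMap.range f)) + pr θ₀ (dimv (Bk i₀ ⧸ LinearMap.range f)) := by
      rw [hdimB, pr_add]
    have hR0 : pr θ₀ (dimv ↥(LinearMap.range f)) ≤ 0 := by
      rw [hw1] at hsplit
      linarith
    have hSR : 0 < ∑ kk, (dimv ↥(LinearMap.range f) kk : ℝ) := sum_dim_pos hdim_zero hRnt
    have hfin := prm (dimv ↥(LinearMap.range f))
    have hmul := mul_pos hε hSR
    linarith
  · -- Part (b)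
    intro X iX1 iX2 hXnot hXp
    by_cases hXs : Subsingleton X
    · exact absurd (show memS Λ Bk dimv θm X from Or.inl hXs) hXnot
    have hXp' := (show Subsingleton X ∨ _ from hXp).resolve_left hXs
    obtain ⟨hXadd, hXppos, hXpq⟩ := hXp'
    haveI hXnt : Nontrivial X := not_subsingleton_iff_nontrivial.mp hXs
    haveI : Module.Finite Λ X := hXadd.finite
    have hUsub : U ⊆ (⋃ i, Wall Λ Bk dimv (Bk i))ᶜ := by
      obtain ⟨θc, _, hUeq⟩ := hU
      rw [hUeq]
      exact connectedComponentIn_subset _ _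
    have hU'sub : U' ⊆ (⋃ i, Wall Λ Bk dimv (Bk i))ᶜ := by
      obtain ⟨θc, _, hUeq⟩ := hU'
      rw [hUeq]
      exact connectedComponentIn_subset _ _
    have descent : ∀ (d : ℕ) (jb : ι) (ℓ : X →ₗ[Λ] Bk jb), Function.Surjective ℓ →
        HasFiltBy Λ (InAdd Λ Bk) ↥(LinearMap.ker ℓ) → pr θm (dimv (Bk jb)) ≤ 0 →
        (∑ kk, dimv (Bk jb) kk) ≤ d →
        ∃ f : X →ₗ[Λ] Bk i₀, f ≠ 0 ∧ Function.Surjective f ∧ IsWAHom Λ Bk f := by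
      intro d
      induction d with
      | zero =>
        intro jb ℓ _ _ _ hd
        exfalso
        haveI hbnt : Nontrivial (Bk jb) := (show Nontrivial (Bk jb) ∧ _ from hbrick jb).1
        have := sum_dim_nat_pos (dimv := dimv) hdim_zero hbnt
        omega
      | succ d IH =>
        intro jb ℓ hsurj hker hneg hd
        by_cases hjb : jb = i₀
        · subst hjb
          haveI hbnt : Nontrivial (Bk jb) := (show Nontrivial (Bk jb) ∧ _ from hbrick jb).1
          obtain ⟨x0, hx0⟩ := exists_ne (0 : Bk jb)
          obtain ⟨y, hy⟩ := hsurj x0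
          have hf0 : ℓ ≠ 0 := by
            intro h
            apply hx0
            rw [← hy, h]
            rfl
          have hrange : LinearMap.range ℓ = ⊤ := LinearMap.range_eq_top.mpr hsurj
          have h1 : InAdd Λ Bk ↥(LinearMap.range ℓ) := by
            rw [hrange]
            exact (InAdd.single jb).of_equiv Submodule.topEquiv.symm
          have h2 : InAdd Λ Bk (Bk jb ⧸ LinearMap.range ℓ) := by
            apply InAdd.of_subsingleton
            exact Submodule.Quotient.subsingleton_iff.mpr hrange
          exact ⟨ℓ, hf0, hsurj, h1, h2, hker⟩
        · haveI hbnt : Nontrivial (Bk jb) := (show Nontrivial (Bk jb) ∧ _ from hbrick jb).1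
          have hpos : 0 < pr θp (dimv (Bk jb)) := by
            by_cases hinj : Function.Injective ℓ
            · have hde : dimv X = dimv (Bk jb) :=
                dim_of_equiv hdim_zero hdim_add (LinearEquiv.ofBijective ℓ ⟨hinj, hsurj⟩)
              rw [← hde]
              exact hXppos
            · exact hXpq (Bk jb) ⟨hbnt, InAdd.single jb, ℓ, hsurj, hinj, hker⟩
          have hSbpos : 0 < ∑ kk, (dimv (Bk jb) kk : ℝ) := sum_dim_pos hdim_zero hbnt
          set Sb := ∑ kk, (dimv (Bk jb) kk : ℝ) with hSb
          set s₀ := -pr θ₀ (dimv (Bk jb)) / Sb with hs₀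
          set θ' := θ₀ + s₀ • (fun _ => (1 : ℝ)) with hθ'
          have hzero : pr θ' (dimv (Bk jb)) = 0 := by
            rw [hθ', pr_line, hs₀, ← hSb]
            field_simp
            ring
          have hm' : pr θ₀ (dimv (Bk jb)) - ε * Sb ≤ 0 := by
            rw [← prm]
            exact hneg
          have hp' : 0 < pr θ₀ (dimv (Bk jb)) + ε * Sb := by
            rw [← prp]
            exact hpos
          have hs₀ge : -ε ≤ s₀ := by
            rw [hs₀, le_div_iff₀ hSbpos]
            nlinarith
          have hs₀lt : s₀ < ε := by
            rw [hs₀, div_lt_iff₀ hSbpos]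
            nlinarith
          have hnw : θ' ∉ Wall Λ Bk dimv (Bk jb) := by
            rcases lt_trichotomy s₀ 0 with hlt | heq | hgt
            · have hmem : θ' ∈ U := by
                have h := (hsmall (-s₀) (by linarith) (by linarith)).1
                rw [hθ']
                rwa [neg_smul, sub_neg_eq_add] at h
              intro hw
              exact (hUsub hmem) (Set.mem_iUnion.mpr ⟨jb, hw⟩)
            · have hteq : θ' = θ₀ := by
                rw [hθ', heq]
                simp
              rw [hteq]
              exact hgen jb hjb
            · have hmem : θ' ∈ U' := by
                have h := (hsmall s₀ hgt (le_of_lt hs₀lt)).2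
                rw [hθ']
                exact h
              intro hw
              exact (hU'sub hmem) (Set.mem_iUnion.mpr ⟨jb, hw⟩)
          have hnotall : ¬ (∀ (N : Type) [AddCommGroup N] [Module Λ N],
              IsWAQuot Λ Bk (Bk jb) N → 0 ≤ pr θ' (dimv N)) := by
            intro hall
            exact hnw ⟨hzero, hall⟩
          push_neg at hnotall
          obtain ⟨N, iN1, iN2, hNq, hNneg⟩ := hnotall
          letI := iN1; letI := iN2
          obtain ⟨hNnt, hNadd, q, hqsurj, hqninj, hqker⟩ := hNq
          haveI : Module.Finite Λ N := hNadd.finite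
          have hNm : pr θm (dimv N) ≤ 0 := by
            have h1 : pr θ' (dimv N) = pr θ₀ (dimv N) + s₀ * ∑ kk, (dimv N kk : ℝ) := by
              rw [hθ', pr_line]
            have h2 := prm (dimv N)
            have h3 := Snn (dimv N)
            nlinarith
          obtain ⟨i1, π, hπs, hπk, hπneg, hπle⟩ :=
            exists_component hdim_zero hdim_add θm hNadd hNnt hNm
          have hq2 : Function.Surjective (q ∘ₗ ℓ) := hqsurj.comp hsurj
          have hk2 : HasFiltBy Λ (InAdd Λ Bk) ↥(LinearMap.ker (q ∘ₗ ℓ)) :=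
            ker_comp_filt ℓ q hsurj hker hqker
          refine IH i1 (π ∘ₗ (q ∘ₗ ℓ)) (hπs.comp hq2) (ker_comp_filt _ _ hq2 hk2 hπk) hπneg ?_
          have hd1 : dimv (Bk jb) = dimv ↥(LinearMap.ker q) + dimv N :=
            hdim_add _ _ _ (LinearMap.ker q).subtype q (Submodule.injective_subtype _) hqsurj
              (by rw [Submodule.range_subtype])
          haveI : Module.Finite Λ ↥(LinearMap.ker q) := finsub _ _
          haveI hker_nt : Nontrivial ↥(LinearMap.ker q) :=
            Submodule.nontrivial_iff_ne_bot.mpr (fun hb => hqninj (LinearMap.ker_eq_bot.mp hb))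
          have hker_pos : 0 < ∑ kk, dimv ↥(LinearMap.ker q) kk :=
            sum_dim_nat_pos (dimv := dimv) hdim_zero hker_nt
          have hsum_eq : ∑ kk, dimv (Bk jb) kk
              = ∑ kk, dimv ↥(LinearMap.ker q) kk + ∑ kk, dimv N kk := by
            rw [hd1]
            simp [Finset.sum_add_distrib]
          have hle : ∑ kk, dimv (Bk i1) kk ≤ ∑ kk, dimv N kk :=
            Finset.sum_le_sum (fun kk _ => hπle kk)
          omega
    have hstart : ∃ (Y : Type) (_ : AddCommGroup Y) (_ : Module Λ Y) (ℓ₀ : X →ₗ[Λ] Y),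
        InAdd Λ Bk Y ∧ Nontrivial Y ∧ Function.Surjective ℓ₀ ∧
          HasFiltBy Λ (InAdd Λ Bk) ↥(LinearMap.ker ℓ₀) ∧ pr θm (dimv Y) ≤ 0 := by
      by_cases hc : 0 < pr θm (dimv X)
      · have hnot2 : ¬ (∀ (N : Type) [AddCommGroup N] [Module Λ N],
            IsWAQuot Λ Bk X N → 0 < pr θm (dimv N)) := by
          intro hall
          exact hXnot (show memS Λ Bk dimv θm X from Or.inr ⟨hXadd, hc, hall⟩)
        push_neg at hnot2
        obtain ⟨N, iN1, iN2, hq, hnpos⟩ := hnot2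
        letI := iN1; letI := iN2
        obtain ⟨hNnt, hNadd, g, hgs, hgni, hgker⟩ := hq
        exact ⟨N, _, _, g, hNadd, hNnt, hgs, hgker, hnpos⟩
      · refine ⟨X, _, _, LinearMap.id, hXadd, hXnt, Function.surjective_id, ?_, not_lt.mp hc⟩
        apply filt_of_subsingleton
        exact Submodule.subsingleton_iff_eq_bot.mpr LinearMap.ker_id
    obtain ⟨Y, iY1, iY2, ℓ₀, hYadd, hYnt, hℓ₀s, hℓ₀k, hYneg⟩ := hstart
    letI := iY1; letI := iY2
    obtain ⟨i1, π, hπs, hπk, hπneg, _⟩ := exists_component hdim_zero hdim_add θm hYadd hYnt hYneg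
    exact descent (∑ kk, dimv (Bk i1) kk) i1 (π ∘ₗ ℓ₀) (hπs.comp hℓ₀s)
      (ker_comp_filt _ _ hℓ₀s hℓ₀k hπk) hπneg le_rfl
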